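/- Let τ : M₃ × ℝ³ → ℝ be twice continuously differentiable, and let V : ℝ³ → ℝ³ be a linear map such that the partial gradient of τ with respect to p satisfies ∂_p τ(F, p) = V p for every (F, p) ∈ M₃ × ℝ³ (in particular, it is independent of F). Then, with σ(F) := τ(F, 0) and κ(p) := (1/2)⟨p, V p⟩, one has τ(F, p) = σ(F) + κ(p) for all (F, p). Moreover, the partial (Frobenius) gradient of τ with respect to F satisfies ∂_F τ(F, p) = ∇σ(F) for all (F,p), i.e., the stress S = ∂_F τ depends only on F and is the gradient of the stored energy σ. -/

import Mathlib

open scoped RealInnerProductSpace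

noncomputable section

abbrev M3 : Type := EuclideanSpace ℝ (Fin 3 × Fin 3)
abbrev R3 : Type := EuclideanSpace ℝ (Fin 3)

/- Along the ray `t ↦ t • p` the derivative of `f` is `⟪V (t • p), p⟫ = t * ⟪p, V p⟫`, so `f (t • p)`
and `t ^ 2 / 2 * ⟪p, V p⟫` differ by a constant. -/
theorem eq_add_half_inner_of_hasGradientAt {E : Type*} [NormedAddCommGroup E]
    [InnerProductSpace ℝ E] [CompleteSpace E] {f : E → ℝ} {V : E →L[ℝ] E}
    (hf : ∀ q, HasGradientAt f (V q) q) (p : E) :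
    f p = f 0 + 1 / 2 * ⟪p, V p⟫ := by
  have hray : ∀ t : ℝ, HasDerivAt (fun t : ℝ => f (t • p) - t ^ 2 / 2 * ⟪p, V p⟫) 0 t := by
    intro t
    have hsmul : HasDerivAt (fun t : ℝ => t • p) p t := by
      simpa using (hasDerivAt_id t).smul_const p
    have hf_ray : HasDerivAt (fun t : ℝ => f (t • p)) (t * ⟪p, V p⟫) t :=
      ((hf (t • p)).hasFDerivAt.comp_hasDerivAt t hsmul).congr_deriv <| by
        simp [real_inner_comm]
    exact (hf_ray.sub (((hasDerivAt_pow 2 t).div_const 2).mul_const ⟪p, V p⟫)).congr_deriv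
      (by ring)
  have hconst := is_const_of_deriv_eq_zero (fun t => (hray t).differentiableAt)
    (fun t => (hray t).deriv) 1 0
  norm_num at hconst
  linarith

theorem stmt9 (τ : M3 × R3 → ℝ) (hτ : ContDiff ℝ 2 τ)
    (V : R3 →L[ℝ] R3)
    (h : ∀ (F : M3) (p : R3), gradient (fun q => τ (F, q)) p = V p) :
    (∀ (F : M3) (p : R3), τ (F, p) = τ (F, 0) + (1 / 2) * ⟪p, V p⟫) ∧
    (∀ (F : M3) (p : R3),
      gradient (fun G => τ (G, p)) F = gradient (fun G => τ (G, 0)) F) := by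
  have hτ_diff : Differentiable ℝ τ := hτ.differentiable two_ne_zero
  have hsplit : ∀ (F : M3) (p : R3), τ (F, p) = τ (F, 0) + (1 / 2) * ⟪p, V p⟫ := by
    intro F
    refine eq_add_half_inner_of_hasGradientAt fun q => h F q ▸ ?_
    exact (hτ_diff.comp ((differentiable_const F).prodMk differentiable_id)).differentiableAt
      |>.hasGradientAt
  refine ⟨hsplit, fun F p => ?_⟩
  have hslice : (fun G : M3 => τ (G, p)) = fun G => τ (G, 0) + (1 / 2) * ⟪p, V p⟫ :=
    funext fun G => hsplit G p
  rw [gradient, gradient, hslice, fderiv_add_const]
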